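/- arXiv:0809.0787 — 7 statements merged into one kernel-verified Lean document; each statement's English description precedes it below -/
import Mathlib

section
/- For every ε ∈ (0,1) and every s with 0 ≤ s < 1 (and s < 1/ε), one has ((1+εs)/(1-εs))^{1/ε} ≤ (1+s)/(1-s). -/
/-!
Taking logarithms, the claim is `ε⁻¹ · L(ε s) ≤ L(s)` for `L(x) = log ((1 + x) / (1 - x))`.
By `L(x) = 2 ∑ x^(2k+1) / (2k+1)` this follows termwise from `ε⁻¹ (ε s)^(2k+1) = ε^(2k) s^(2k+1) ≤ s^(2k+1)`.
-/

open Real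

theorem inv_mul_pow_succ_mul_le_pow_succ {ε x : ℝ} (hε0 : 0 < ε) (hε1 : ε ≤ 1) (hx : 0 ≤ x)
    (n : ℕ) : ε⁻¹ * (ε * x) ^ (n + 1) ≤ x ^ (n + 1) := by
  calc ε⁻¹ * (ε * x) ^ (n + 1) = ε ^ n * x ^ (n + 1) := by
        rw [mul_pow, pow_succ', mul_assoc, inv_mul_cancel_left₀ hε0.ne']
    _ ≤ x ^ (n + 1) := mul_le_of_le_one_left (by positivity) (pow_le_one₀ hε0.le hε1)

theorem inv_mul_log_div_one_sub_le {ε x : ℝ} (hε0 : 0 < ε) (hε1 : ε ≤ 1) (hx0 : 0 ≤ x)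
    (hx1 : x < 1) :
    ε⁻¹ * log ((1 + ε * x) / (1 - ε * x)) ≤ log ((1 + x) / (1 - x)) := by
  have hεx : ε * x ≤ x := mul_le_of_le_one_left hx0 hε1
  have hεx0 : 0 ≤ ε * x := by positivity
  rw [log_div (by linarith) (by linarith), log_div (by linarith) (by linarith)]
  refine hasSum_le (fun k => ?_)
    ((hasSum_log_sub_log_of_abs_lt_one (abs_lt.2 ⟨by linarith, by linarith⟩)).mul_left ε⁻¹)
    (hasSum_log_sub_log_of_abs_lt_one (abs_lt.2 ⟨by linarith, hx1⟩))
  calc ε⁻¹ * (2 * (1 / (2 * (k : ℝ) + 1)) * (ε * x) ^ (2 * k + 1))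
      = 2 * (1 / (2 * (k : ℝ) + 1)) * (ε⁻¹ * (ε * x) ^ (2 * k + 1)) := by ring
    _ ≤ 2 * (1 / (2 * (k : ℝ) + 1)) * x ^ (2 * k + 1) :=
        mul_le_mul_of_nonneg_left (inv_mul_pow_succ_mul_le_pow_succ hε0 hε1 hx0 _) (by positivity)

theorem stmt_3 (ε s : ℝ) (hε0 : 0 < ε) (hε1 : ε < 1) (hs0 : 0 ≤ s) (hs1 : s < 1) :
    ((1 + ε * s) / (1 - ε * s)) ^ (1 / ε) ≤ (1 + s) / (1 - s) := by
  have hεs : ε * s < 1 := by nlinarith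
  have hbase : 0 < (1 + ε * s) / (1 - ε * s) := div_pos (by positivity) (by linarith)
  calc ((1 + ε * s) / (1 - ε * s)) ^ (1 / ε)
      = exp (ε⁻¹ * log ((1 + ε * s) / (1 - ε * s))) := by
        rw [rpow_def_of_pos hbase, one_div, mul_comm]
    _ ≤ exp (log ((1 + s) / (1 - s))) :=
        exp_le_exp.2 (inv_mul_log_div_one_sub_le hε0 hε1.le hs0 hs1)
    _ = (1 + s) / (1 - s) := exp_log (div_pos (by linarith) (by linarith))
end

section
/- For all ε ∈ (0,1) and 0 ≤ s ≤ t < 1/ε: ((1-εs)/(1+εs))^{1/(2ε)} · (((1+εs)/(1-εs))^{1/ε} − 1) · ((1-εt)/(1+εt))^{1/(2ε)} − e^{-s}(e^{2s}−1)e^{-t} ≤ e^{-s-t}. -/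
/-!
With `u x = artanh (ε x) / ε`, the real powers are exponentials:
`((1 + ε x) / (1 - ε x)) ^ (1 / (2 ε)) = exp (u x)`, so the first kernel is
`exp (u s - u t) - exp (-u s - u t)` and the second `exp (s - t) - exp (-s - t)`.
Since `artanh' = (1 - x²)⁻¹ ≥ 1`, the map `x ↦ u x - x` is monotone, hence `u s - u t ≤ s - t`, and
the difference of the kernels is at most `exp (s - t) - (exp (s - t) - exp (-s - t)) = exp (-s - t)`.
-/

open Real Set

namespace Real

theorem artanh_eq_half_log_sub_log {x : ℝ} (hx : x ∈ Ioo (-1) 1) :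
    artanh x = (log (1 + x) - log (1 - x)) / 2 := by
  rw [artanh_eq_half_log (Ioo_subset_Icc_self hx), log_div (by linarith [hx.1]) (by linarith [hx.2])]
  ring

theorem hasDerivAt_artanh {x : ℝ} (hx : x ∈ Ioo (-1) 1) : HasDerivAt artanh (1 - x ^ 2)⁻¹ x := by
  have hp : 1 + x ≠ 0 := by linarith [hx.1]
  have hm : 1 - x ≠ 0 := by linarith [hx.2]
  have hlog : HasDerivAt (fun y => (log (1 + y) - log (1 - y)) / 2)
      ((1 / (1 + x) - -1 / (1 - x)) / 2) x :=
    ((((hasDerivAt_id x).const_add 1).log (by simpa using hp)).sub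
      (((hasDerivAt_id x).const_sub 1).log (by simpa using hm))).div_const 2
  refine (hlog.congr_of_eventuallyEq ?_).congr_deriv ?_
  · filter_upwards [Ioo_mem_nhds hx.1 hx.2] with y hy using artanh_eq_half_log_sub_log hy
  · have : 1 - x ^ 2 = (1 + x) * (1 - x) := by ring
    rw [this]
    field_simp
    ring

theorem monotoneOn_artanh_sub_id : MonotoneOn (fun x => artanh x - x) (Ioo (-1) 1) := by
  refine monotoneOn_of_hasDerivWithinAt_nonneg (convex_Ioo _ _)
    (fun x hx => ((hasDerivAt_artanh hx).sub (hasDerivAt_id x)).continuousAt.continuousWithinAt)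
    (fun x hx => ?_) (fun x hx => ?_) (f' := fun x => (1 - x ^ 2)⁻¹ - 1)
  · rw [interior_Ioo] at hx
    exact ((hasDerivAt_artanh hx).sub (hasDerivAt_id x)).hasDerivWithinAt
  · rw [interior_Ioo] at hx
    have h0 : 0 < 1 - x ^ 2 := by nlinarith [hx.1, hx.2]
    rw [sub_nonneg, one_le_inv₀ h0]
    nlinarith

theorem sub_le_artanh_sub_artanh {a b : ℝ} (ha : -1 < a) (hb : b < 1) (hab : a ≤ b) :
    b - a ≤ artanh b - artanh a := by
  have := monotoneOn_artanh_sub_id ⟨ha, hab.trans_lt hb⟩ ⟨ha.trans_le hab, hb⟩ hab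
  simp only at this
  linarith

theorem div_rpow_eq_exp_artanh {x : ℝ} (hx : x ∈ Ioo (-1) 1) (c : ℝ) :
    ((1 + x) / (1 - x)) ^ c = exp (2 * c * artanh x) := by
  rw [rpow_def_of_pos (div_pos (by linarith [hx.1]) (by linarith [hx.2])),
    artanh_eq_half_log (Ioo_subset_Icc_self hx)]
  ring_nf

theorem div_rpow_eq_exp_neg_artanh {x : ℝ} (hx : x ∈ Ioo (-1) 1) (c : ℝ) :
    ((1 - x) / (1 + x)) ^ c = exp (-(2 * c * artanh x)) := by
  rw [← inv_div, inv_rpow (div_pos (by linarith [hx.1]) (by linarith [hx.2])).le,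
    div_rpow_eq_exp_artanh hx, exp_neg]

theorem exp_neg_mul_exp_two_mul_sub_one_mul_exp_neg (x y : ℝ) :
    exp (-x) * (exp (2 * x) - 1) * exp (-y) = exp (x - y) - exp (-x - y) := by
  simp only [mul_sub, sub_mul, mul_one, ← exp_add]
  ring_nf

theorem exp_neg_mul_exp_two_mul_sub_one_mul_exp_neg_sub_le {u v s t : ℝ} (h : u - v ≤ s - t) :
    exp (-u) * (exp (2 * u) - 1) * exp (-v) - exp (-s) * (exp (2 * s) - 1) * exp (-t)
      ≤ exp (-s - t) := by
  rw [exp_neg_mul_exp_two_mul_sub_one_mul_exp_neg, exp_neg_mul_exp_two_mul_sub_one_mul_exp_neg]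
  linarith [exp_le_exp.mpr h, exp_pos (-u - v)]

end Real

theorem stmt_5_general (ε s t : ℝ) (hε0 : 0 < ε) (hs0 : 0 ≤ s) (hst : s ≤ t)
    (ht : t < 1 / ε) :
    ((1 - ε * s) / (1 + ε * s)) ^ (1 / (2 * ε))
        * (((1 + ε * s) / (1 - ε * s)) ^ (1 / ε) - 1)
        * ((1 - ε * t) / (1 + ε * t)) ^ (1 / (2 * ε))
      - Real.exp (-s) * (Real.exp (2 * s) - 1) * Real.exp (-t)
      ≤ Real.exp (-s - t) := by
  have hεt : ε * t < 1 := by rwa [lt_div_iff₀' hε0] at ht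
  have hεs_mem : ε * s ∈ Ioo (-1) 1 := ⟨by nlinarith, by nlinarith⟩
  have hεt_mem : ε * t ∈ Ioo (-1) 1 := ⟨by nlinarith, hεt⟩
  rw [div_rpow_eq_exp_neg_artanh hεs_mem, div_rpow_eq_exp_artanh hεs_mem,
    div_rpow_eq_exp_neg_artanh hεt_mem]
  have hscale (x : ℝ) : 2 * (1 / (2 * ε)) * x = x / ε := by field_simp
  have hdouble : 2 * (1 / ε) * artanh (ε * s) = 2 * (artanh (ε * s) / ε) := by ring
  rw [hscale, hscale, hdouble]
  apply exp_neg_mul_exp_two_mul_sub_one_mul_exp_neg_sub_le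
  have hgap := sub_le_artanh_sub_artanh hεs_mem.1 hεt (by nlinarith)
  rw [← sub_div, div_le_iff₀ hε0]
  linarith

theorem stmt_5 (ε s t : ℝ) (hε0 : 0 < ε) (hε1 : ε < 1) (hs0 : 0 ≤ s) (hst : s ≤ t)
    (ht : t < 1 / ε) :
    ((1 - ε * s) / (1 + ε * s)) ^ (1 / (2 * ε))
        * (((1 + ε * s) / (1 - ε * s)) ^ (1 / ε) - 1)
        * ((1 - ε * t) / (1 + ε * t)) ^ (1 / (2 * ε))
      - Real.exp (-s) * (Real.exp (2 * s) - 1) * Real.exp (-t)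
      ≤ Real.exp (-s - t) :=
  stmt_5_general ε s t hε0 hs0 hst ht
end

section
/- The eigenvalue equation −(s/2) f'' + s f' = λ f has a polynomial solution with zero constant term of degree n precisely when λ = n, for each positive integer n, and this polynomial solution is unique up to scalar multiple. -/
/-!
In coefficients, `L₀ f = -(s/2) f'' + s f'` sends `∑ aₖ sᵏ` to `∑ (k aₖ - k(k+1)/2 aₖ₊₁) sᵏ`,
so it is upper triangular on polynomials with diagonal entries `0, 1, 2, …`. Comparing top
coefficients in `L₀ p = λ p` forces `λ = deg p`; comparing constant terms forces `p(0) = 0` when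
`λ ≠ 0`. For uniqueness, a suitable combination of two eigenpolynomials of degree `n` has vanishing
`sⁿ`-coefficient, so it cannot have degree `n` and must vanish. For existence, `L₀ - n` is
injective, hence bijective, on polynomials of degree `< n`, and it maps `sⁿ` into that space; so
`sⁿ` can be corrected by a lower-degree polynomial to an eigenpolynomial.
-/

open Polynomial

namespace Polynomial

variable {K : Type*} [Field K]

/-- `L₀ f = -(s/2) f'' + s f' = s (f' - f''/2)`. -/
noncomputable def sturmLiouvilleOp : K[X] →ₗ[K] K[X] :=
  LinearMap.mulLeft K X ∘ₗ (derivative - (2⁻¹ : K) • derivative ∘ₗ derivative)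

theorem sturmLiouvilleOp_apply (p : K[X]) :
    sturmLiouvilleOp p = X * (derivative p - (2⁻¹ : K) • derivative (derivative p)) := rfl

theorem coeff_sturmLiouvilleOp (p : K[X]) (k : ℕ) :
    (sturmLiouvilleOp p).coeff k = k * p.coeff k - k * (k + 1) / 2 * p.coeff (k + 1) := by
  cases k with
  | zero => simp [sturmLiouvilleOp_apply]
  | succ m =>
    simp only [sturmLiouvilleOp_apply, coeff_X_mul, coeff_sub, coeff_smul, coeff_derivative,
      smul_eq_mul]
    push_cast
    ring

theorem eq_natDegree_of_sturmLiouvilleOp_eq_smul {p : K[X]} {lam : K} (hp : p ≠ 0)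
    (h : sturmLiouvilleOp p = lam • p) : lam = p.natDegree := by
  have hcoeff := congrArg (coeff · p.natDegree) h
  simp only [coeff_sturmLiouvilleOp, coeff_smul, smul_eq_mul,
    coeff_eq_zero_of_natDegree_lt (Nat.lt_succ_self _), mul_zero, sub_zero] at hcoeff
  exact (mul_right_cancel₀ (leadingCoeff_ne_zero.mpr hp) hcoeff).symm

theorem coeff_zero_eq_zero_of_sturmLiouvilleOp_eq_smul {p : K[X]} {lam : K} (hlam : lam ≠ 0)
    (h : sturmLiouvilleOp p = lam • p) : p.coeff 0 = 0 := by
  have hcoeff := congrArg (coeff · 0) h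
  simp only [coeff_sturmLiouvilleOp, coeff_smul, smul_eq_mul] at hcoeff
  simpa [hlam] using hcoeff.symm

theorem sturmLiouvilleOp_sub_smul_mem_degreeLT {n : ℕ} {p : K[X]}
    (hp : p ∈ degreeLT K (n + 1)) :
    sturmLiouvilleOp p - (n : K) • p ∈ degreeLT K n := by
  rw [mem_degreeLT, degree_lt_iff_coeff_zero] at hp ⊢
  intro m hm
  simp only [coeff_sub, coeff_smul, smul_eq_mul, coeff_sturmLiouvilleOp, hp (m + 1) (by omega)]
  rcases hm.eq_or_lt with rfl | hlt
  · ring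
  · rw [hp m hlt]
    ring

variable [CharZero K]

theorem exists_natDegree_eq_sturmLiouvilleOp_eq_smul (n : ℕ) :
    ∃ p : K[X], p ≠ 0 ∧ p.natDegree = n ∧ sturmLiouvilleOp p = (n : K) • p := by
  set T : K[X] →ₗ[K] K[X] := sturmLiouvilleOp - (n : K) • LinearMap.id
  have hmaps : ∀ r ∈ degreeLT K n, T r ∈ degreeLT K n := fun r hr =>
    sturmLiouvilleOp_sub_smul_mem_degreeLT (degreeLT_mono n.le_succ hr)
  have hinj : Function.Injective (T.restrict hmaps) := by
    rw [← LinearMap.ker_eq_bot, Submodule.eq_bot_iff]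
    rintro ⟨r, hr⟩ hker
    simp only [LinearMap.mem_ker, LinearMap.restrict_apply, Subtype.ext_iff,
      ZeroMemClass.coe_zero] at hker
    by_contra hne
    have hr0 : r ≠ 0 := fun h => hne (Subtype.ext h)
    have hdeg := eq_natDegree_of_sturmLiouvilleOp_eq_smul hr0 (sub_eq_zero.mp hker)
    rw [mem_degreeLT, degree_eq_natDegree hr0, Nat.cast_lt] at hr
    exact hr.ne (Nat.cast_injective hdeg).symm
  obtain ⟨⟨r, hr⟩, hTr⟩ := LinearMap.injective_iff_surjective.mp hinj
    ⟨-T (X ^ n), Submodule.neg_mem _ (sturmLiouvilleOp_sub_smul_mem_degreeLT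
      (mem_degreeLT.mpr ((degree_X_pow_le n).trans_lt (by exact_mod_cast n.lt_succ_self))))⟩
  have hTr : T r = -T (X ^ n) := congrArg Subtype.val hTr
  have hmonic : (X ^ n + r).Monic := monic_X_pow_add (mem_degreeLT.mp hr)
  refine ⟨X ^ n + r, hmonic.ne_zero, ?_, ?_⟩
  · rw [natDegree_add_eq_left_of_degree_lt, natDegree_X_pow]
    simpa using mem_degreeLT.mp hr
  · rw [← sub_eq_zero]
    change T (X ^ n + r) = 0
    rw [map_add, hTr, add_neg_cancel]

theorem smul_eq_smul_of_sturmLiouvilleOp_eq_smul {n : ℕ} {p q : K[X]}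
    (hLp : sturmLiouvilleOp p = (n : K) • p) (hLq : sturmLiouvilleOp q = (n : K) • q) :
    q.coeff n • p = p.coeff n • q := by
  set r := q.coeff n • p - p.coeff n • q
  have hLr : sturmLiouvilleOp r = (n : K) • r := by
    simp only [r, map_sub, map_smul, hLp, hLq, smul_sub, smul_comm (n : K)]
  by_contra hr
  have hdeg : r.natDegree = n :=
    Nat.cast_injective (eq_natDegree_of_sturmLiouvilleOp_eq_smul (sub_ne_zero.mpr hr) hLr).symm
  have hlead : r.leadingCoeff = 0 := by
    simp only [leadingCoeff, hdeg, r, coeff_sub, coeff_smul, smul_eq_mul, mul_comm, sub_self]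
  exact sub_ne_zero.mpr hr (leadingCoeff_eq_zero.mp hlead)

end Polynomial

open Polynomial

theorem eval_sturmLiouvilleOp (p : ℝ[X]) (s : ℝ) :
    (sturmLiouvilleOp p).eval s
      = -(s / 2) * (p.derivative.derivative.eval s) + s * (p.derivative.eval s) := by
  simp only [sturmLiouvilleOp_apply, eval_mul, eval_X, eval_sub, eval_smul, smul_eq_mul]
  ring

theorem sturmLiouvilleOp_eq_smul_iff {p : ℝ[X]} {lam : ℝ} :
    sturmLiouvilleOp p = lam • p ↔ ∀ s : ℝ, 0 < s →
      -(s / 2) * (p.derivative.derivative.eval s) + s * (p.derivative.eval s) = lam * p.eval s := by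
  simp only [← eval_sturmLiouvilleOp]
  refine ⟨fun h s _ => by rw [h, eval_smul, smul_eq_mul], fun h => ?_⟩
  refine eq_of_infinite_eval_eq _ _ ((Set.Ioi_infinite 0).mono fun s hs => ?_)
  rw [Set.mem_ofPred_eq, h s hs, eval_smul, smul_eq_mul]

theorem stmt_11 (n : ℕ) (hn : 1 ≤ n) :
    (∀ lam : ℝ,
      ((∃ p : Polynomial ℝ, p ≠ 0 ∧ p.coeff 0 = 0 ∧ p.natDegree = n ∧
          ∀ s : ℝ, 0 < s →
            -(s / 2) * (p.derivative.derivative.eval s) + s * (p.derivative.eval s)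
              = lam * p.eval s)
        ↔ lam = n)) ∧
    (∀ p q : Polynomial ℝ,
      p ≠ 0 → p.coeff 0 = 0 → p.natDegree = n →
      (∀ s : ℝ, 0 < s →
        -(s / 2) * (p.derivative.derivative.eval s) + s * (p.derivative.eval s)
          = n * p.eval s) →
      q ≠ 0 → q.coeff 0 = 0 → q.natDegree = n →
      (∀ s : ℝ, 0 < s →
        -(s / 2) * (q.derivative.derivative.eval s) + s * (q.derivative.eval s)
          = n * q.eval s) →
      ∃ c : ℝ, q = c • p) := by
  refine ⟨fun lam => ⟨?_, ?_⟩, ?_⟩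
  · rintro ⟨p, hp0, -, rfl, hp⟩
    exact eq_natDegree_of_sturmLiouvilleOp_eq_smul hp0 (sturmLiouvilleOp_eq_smul_iff.mpr hp)
  · rintro rfl
    obtain ⟨p, hp0, hdeg, hp⟩ := exists_natDegree_eq_sturmLiouvilleOp_eq_smul (K := ℝ) n
    refine ⟨p, hp0, ?_, hdeg, sturmLiouvilleOp_eq_smul_iff.mp hp⟩
    exact coeff_zero_eq_zero_of_sturmLiouvilleOp_eq_smul (Nat.cast_ne_zero.mpr (by omega)) hp
  · rintro p q hp0 - hpdeg hp - - - hq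
    have hpn : p.coeff n ≠ 0 := hpdeg ▸ leadingCoeff_ne_zero.mpr hp0
    have hpq := smul_eq_smul_of_sturmLiouvilleOp_eq_smul
      (sturmLiouvilleOp_eq_smul_iff.mpr hp) (sturmLiouvilleOp_eq_smul_iff.mpr hq)
    refine ⟨q.coeff n / p.coeff n, ?_⟩
    rw [div_eq_inv_mul, mul_smul, hpq, smul_smul, inv_mul_cancel₀ hpn, one_smul]
end

section
/- Define G₀(s,t) = (1/2)(e^{2·min(s,t)} − 1) and w₀(s) = 2s^{-1}e^{-2s}. Then ∫₀^∞ ∫₀^∞ |G₀(s,t)|² w₀(s) w₀(t) dt ds ≤ 5; in particular the integral operator with kernel G₀ on L²((0,∞), w₀ ds) is Hilbert–Schmidt. -/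
/-!
For `0 < s ≤ t` the integrand equals `φ₁(s) · (1 - e^{-2s})/t · e^{-2(t-s)}` with
`φ₁(x) = (1 - e^{-2x})/x ≤ min 2 x⁻¹`, so it is dominated by `φ(s) φ(t) e^{-2|s-t|}` with
`φ(x) = min 2 x⁻¹`. The kernel `e^{-2|s-t|}` is symmetric with rows of mass at most `1`, so a
Schur test bounds the double integral by `∫₀^∞ φ² = 4`.
-/

open MeasureTheory Real Set
open scoped ENNReal

theorem one_sub_exp_neg_two_mul_div_le {x : ℝ} (hx : 0 < x) :
    (1 - exp (-2 * x)) / x ≤ min 2 x⁻¹ := by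
  have h_lin : 1 - exp (-2 * x) ≤ 2 * x := by linarith [add_one_le_exp (-2 * x)]
  have h_one : 1 - exp (-2 * x) ≤ 1 := by linarith [exp_pos (-2 * x)]
  refine le_min ?_ ?_
  · rwa [div_le_iff₀ hx]
  · rw [div_eq_mul_inv]
    exact mul_le_of_le_one_left (inv_pos.2 hx).le h_one

theorem green_sq_mul_weight_le_of_le {s t : ℝ} (hs : 0 < s) (hst : s ≤ t) :
    |1 / 2 * (exp (2 * s) - 1)| ^ 2 * (2 * s⁻¹ * exp (-2 * s)) * (2 * t⁻¹ * exp (-2 * t))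
      ≤ min 2 s⁻¹ * min 2 t⁻¹ * exp (-2 * (t - s)) := by
  have ht : 0 < t := hs.trans_le hst
  have h_eq : |1 / 2 * (exp (2 * s) - 1)| ^ 2 * (2 * s⁻¹ * exp (-2 * s))
      * (2 * t⁻¹ * exp (-2 * t))
      = (1 - exp (-2 * s)) / s * ((1 - exp (-2 * s)) / t) * exp (-2 * (t - s)) := by
    rw [sq_abs, show -2 * (t - s) = 2 * s + -2 * t by ring, exp_add,
      show -2 * s = -(2 * s) by ring, exp_neg]
    field_simp
  have h_mono : 1 - exp (-2 * s) ≤ 1 - exp (-2 * t) :=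
    sub_le_sub_left (exp_le_exp.2 (by linarith)) 1
  have h_nonneg : 0 ≤ 1 - exp (-2 * s) := sub_nonneg.2 (exp_le_one_iff.2 (by linarith))
  rw [h_eq]
  gcongr
  · exact one_sub_exp_neg_two_mul_div_le hs
  · exact (div_le_div_of_nonneg_right h_mono ht.le).trans (one_sub_exp_neg_two_mul_div_le ht)

theorem green_sq_mul_weight_le {s t : ℝ} (hs : 0 < s) (ht : 0 < t) :
    |1 / 2 * (exp (2 * min s t) - 1)| ^ 2 * (2 * s⁻¹ * exp (-2 * s)) * (2 * t⁻¹ * exp (-2 * t))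
      ≤ min 2 s⁻¹ * min 2 t⁻¹ * exp (-2 * |s - t|) := by
  rcases le_total s t with hst | hts
  · rw [min_eq_left hst, abs_sub_comm, abs_of_nonneg (sub_nonneg.2 hst)]
    exact green_sq_mul_weight_le_of_le hs hst
  · rw [min_eq_right hts, abs_of_nonneg (sub_nonneg.2 hts)]
    linarith [green_sq_mul_weight_le_of_le ht hts]

theorem integrable_exp_neg_mul_abs {c : ℝ} (hc : 0 < c) :
    Integrable fun x : ℝ => exp (-c * |x|) := by
  rw [← integrableOn_univ, ← Iic_union_Ioi (a := 0), integrableOn_union]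
  constructor
  · refine (integrableOn_exp_mul_Iic hc 0).congr_fun (fun x hx => ?_) measurableSet_Iic
    simp [abs_of_nonpos (show x ≤ 0 from hx)]
  · refine (exp_neg_integrableOn_Ioi 0 hc).congr_fun (fun x hx => ?_) measurableSet_Ioi
    simp [abs_of_pos (show 0 < x from hx)]

theorem lintegral_exp_neg_mul_abs_sub {c : ℝ} (hc : 0 < c) (s : ℝ) :
    ∫⁻ t, ENNReal.ofReal (exp (-c * |s - t|)) = ENNReal.ofReal (2 / c) := by
  rw [lintegral_sub_left_eq_self (fun x => ENNReal.ofReal (exp (-c * |x|))) s,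
    ← ofReal_integral_eq_lintegral_ofReal (integrable_exp_neg_mul_abs hc)
      (ae_of_all _ fun _ => (exp_pos _).le),
    integral_comp_abs (f := fun x => exp (-c * x)), integral_exp_mul_Ioi (neg_lt_zero.2 hc)]
  congr 1
  field_simp
  simp

theorem lintegral_Ioi_ofReal_min_inv_sq {c : ℝ} (hc : 0 < c) :
    ∫⁻ s in Ioi 0, ENNReal.ofReal (min c s⁻¹) ^ 2 = ENNReal.ofReal (2 * c) := by
  have hc' : 0 < c⁻¹ := inv_pos.2 hc
  rw [← Ioc_union_Ioi_eq_Ioi hc'.le, lintegral_union measurableSet_Ioi Ioc_disjoint_Ioi_same]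
  have h_near : ∫⁻ s in Ioc 0 c⁻¹, ENNReal.ofReal (min c s⁻¹) ^ 2 = ENNReal.ofReal c := by
    rw [setLIntegral_congr_fun measurableSet_Ioc (g := fun _ => ENNReal.ofReal (c ^ 2))
      fun s hs => by rw [min_eq_left ((le_inv_comm₀ hc hs.1).2 hs.2), ENNReal.ofReal_pow hc.le],
      setLIntegral_const, Real.volume_Ioc, ← ENNReal.ofReal_mul (by positivity)]
    congr 1
    field_simp
    ring
  have h_far : ∫⁻ s in Ioi c⁻¹, ENNReal.ofReal (min c s⁻¹) ^ 2 = ENNReal.ofReal c := by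
    rw [setLIntegral_congr_fun measurableSet_Ioi (g := fun s => ENNReal.ofReal (s ^ (-2 : ℝ)))
      fun s hs => ?_, ← ofReal_integral_eq_lintegral_ofReal
        (integrableOn_Ioi_rpow_of_lt (by norm_num) hc')
        ((ae_restrict_mem measurableSet_Ioi).mono fun s hs => rpow_nonneg (hc'.trans hs).le _),
      integral_Ioi_rpow_of_lt (by norm_num) hc']
    · congr 1
      norm_num [rpow_neg_one]
    · have hs0 : 0 < s := hc'.trans hs
      dsimp only
      rw [min_eq_right ((inv_le_comm₀ hs0 hc).2 hs.le), ← ENNReal.ofReal_pow (inv_nonneg.2 hs0.le),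
        rpow_neg hs0.le, rpow_two, inv_pow]
  rw [h_near, h_far, ← ENNReal.ofReal_add hc.le hc.le, two_mul]

theorem ENNReal.two_mul_le_add_sq (a b : ℝ≥0∞) : 2 * a * b ≤ a ^ 2 + b ^ 2 := by
  induction a using ENNReal.recTopCoe with
  | top => rcases eq_or_ne b 0 with rfl | hb <;> simp [*, ENNReal.top_pow]
  | coe a =>
    induction b using ENNReal.recTopCoe with
    | top => rcases eq_or_ne (a : ℝ≥0∞) 0 with h | h <;> simp [*, ENNReal.top_pow]
    | coe b => exact_mod_cast _root_.two_mul_le_add_sq a b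

/-- Schur test: `2 f s f t ≤ f s ^ 2 + f t ^ 2`, and by the symmetry of `k` both halves
integrate to the same row-mass bound. -/
theorem lintegral_lintegral_mul_mul_le {α : Type*} [MeasurableSpace α] {μ : Measure α}
    [SFinite μ] {f : α → ℝ≥0∞} {k : α → α → ℝ≥0∞} (hf : Measurable f)
    (hk : Measurable (Function.uncurry k)) (hk_symm : ∀ s t, k s t = k t s)
    (hk_le : ∀ᵐ s ∂μ, ∫⁻ t, k s t ∂μ ≤ 1) :
    ∫⁻ s, ∫⁻ t, f s * f t * k s t ∂μ ∂μ ≤ ∫⁻ s, f s ^ 2 ∂μ := by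
  have hsq : Measurable (Function.uncurry fun s t => f s ^ 2 * k s t) :=
    (hf.comp measurable_fst).pow_const 2 |>.mul hk
  have hsq' : Measurable (Function.uncurry fun s t => f t ^ 2 * k s t) :=
    (hf.comp measurable_snd).pow_const 2 |>.mul hk
  have hswap : ∫⁻ s, ∫⁻ t, f t ^ 2 * k s t ∂μ ∂μ = ∫⁻ s, ∫⁻ t, f s ^ 2 * k s t ∂μ ∂μ := by
    rw [lintegral_lintegral_swap hsq'.aemeasurable]
    simp_rw [hk_symm]
  have hrow : ∫⁻ s, ∫⁻ t, f s ^ 2 * k s t ∂μ ∂μ ≤ ∫⁻ s, f s ^ 2 ∂μ := by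
    refine lintegral_mono_ae (hk_le.mono fun s hs => ?_)
    rw [lintegral_const_mul _ hk.of_uncurry_left]
    exact mul_le_of_le_one_right' hs
  refine (ENNReal.mul_le_mul_iff_right two_ne_zero ENNReal.ofNat_ne_top).1 ?_
  calc 2 * ∫⁻ s, ∫⁻ t, f s * f t * k s t ∂μ ∂μ
      = ∫⁻ s, ∫⁻ t, 2 * f s * f t * k s t ∂μ ∂μ := by
        simp_rw [← lintegral_const_mul' _ _ ENNReal.ofNat_ne_top, mul_assoc]
    _ ≤ ∫⁻ s, ∫⁻ t, (f s ^ 2 * k s t + f t ^ 2 * k s t) ∂μ ∂μ := by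
        gcongr with s t
        rw [← add_mul]
        gcongr
        exact ENNReal.two_mul_le_add_sq _ _
    _ = ∫⁻ s, ∫⁻ t, f s ^ 2 * k s t ∂μ ∂μ + ∫⁻ s, ∫⁻ t, f t ^ 2 * k s t ∂μ ∂μ := by
        simp_rw [lintegral_add_left hsq.of_uncurry_left]
        exact lintegral_add_left hsq.lintegral_prod_right' _
    _ ≤ 2 * ∫⁻ s, f s ^ 2 ∂μ := by
        rw [hswap, two_mul]
        gcongr

theorem stmt_12
    (G₀ : ℝ → ℝ → ℝ) (hG : G₀ = fun s t => (1 / 2) * (Real.exp (2 * min s t) - 1))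
    (w₀ : ℝ → ℝ) (hw : w₀ = fun s => 2 * s⁻¹ * Real.exp (-2 * s)) :
    ∫⁻ s in Ioi (0:ℝ), ∫⁻ t in Ioi (0:ℝ),
        ENNReal.ofReal (|G₀ s t| ^ 2 * w₀ s * w₀ t) ≤ 5 := by
  subst hG hw
  set f : ℝ → ℝ≥0∞ := fun s => ENNReal.ofReal (min 2 s⁻¹)
  set k : ℝ → ℝ → ℝ≥0∞ := fun s t => ENNReal.ofReal (exp (-2 * |s - t|))
  have hk_le : ∀ᵐ s ∂volume.restrict (Ioi 0), ∫⁻ t in Ioi 0, k s t ≤ 1 :=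
    ae_of_all _ fun s => (setLIntegral_le_lintegral _ _).trans_eq <| by
      rw [lintegral_exp_neg_mul_abs_sub two_pos]
      norm_num
  calc _ ≤ ∫⁻ s in Ioi 0, ∫⁻ t in Ioi 0, f s * f t * k s t := by
        refine setLIntegral_mono' measurableSet_Ioi fun s hs =>
          setLIntegral_mono' measurableSet_Ioi fun t ht => ?_
        have h_min : ∀ x : ℝ, 0 < x → 0 ≤ min 2 x⁻¹ := fun x hx =>
          le_min zero_le_two (inv_nonneg.2 hx.le)
        simp only [f, k]
        rw [← ENNReal.ofReal_mul (h_min s hs),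
          ← ENNReal.ofReal_mul (mul_nonneg (h_min s hs) (h_min t ht))]
        exact ENNReal.ofReal_le_ofReal (green_sq_mul_weight_le hs ht)
    _ ≤ ∫⁻ s in Ioi 0, f s ^ 2 :=
        lintegral_lintegral_mul_mul_le (by fun_prop) (by fun_prop)
          (fun s t => by simp only [k, abs_sub_comm]) hk_le
    _ = 4 := by
        rw [lintegral_Ioi_ofReal_min_inv_sq two_pos]
        norm_num
    _ ≤ 5 := by norm_num
end

section
/- Define K₀(s,t) = (st)^{-1/2} e^{-s}(e^{2·min(s,t)} − 1) e^{-t} for s,t > 0. Then K₀ ∈ L²((0,∞)², ds dt), i.e. ∫₀^∞∫₀^∞ K₀(s,t)² dt ds < ∞. -/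
/-!
With `φ(u) = (1 - e^{-2u}) / u = K₀(u, u)`, for `0 < s ≤ t` one has
`K₀(s,t)² = (1 - e^{-2s})² e^{-2(t-s)} / (st) ≤ φ(s) φ(t) e^{-2|t-s|}`.
Since `φ ≤ 2` and `u φ(u) ≤ 1`, `φ(u)² ≤ 5 ρ(u)` with `ρ(x) = (1 + x²)⁻¹`, and
`e^{-2|x|} ≤ ρ(x)`; so by AM–GM `K₀(s,t)² ≤ 5 ρ(s) ρ(t-s) + 5 ρ(t) ρ(s-t)`. Each term
integrates over the whole plane to `5 ‖ρ‖₁²` by translation invariance.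
-/
open MeasureTheory Real Set

open scoped ENNReal

theorem lintegral_lintegral_mul_sub_right {G : Type*} [MeasurableSpace G] [AddGroup G]
    [MeasurableAdd G] [MeasurableSub G] (μ : Measure G) [μ.IsAddRightInvariant]
    {f g : G → ℝ≥0∞} (hf : AEMeasurable f μ) (hg : Measurable g) :
    ∫⁻ s, ∫⁻ t, f s * g (t - s) ∂μ ∂μ = (∫⁻ s, f s ∂μ) * ∫⁻ t, g t ∂μ := by
  have inner (s : G) : ∫⁻ t, f s * g (t - s) ∂μ = f s * ∫⁻ t, g t ∂μ := by
    rw [lintegral_const_mul _ (f := fun t => g (t - s))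
      (hg.comp (measurable_sub_const s)), lintegral_sub_right_eq_self]
  simp_rw [inner]
  exact lintegral_mul_const'' _ hf

theorem lintegral_lintegral_add_swap {α : Type*} [MeasurableSpace α] (μ : Measure α)
    [SFinite μ] {F : α → α → ℝ≥0∞} (hF : Measurable (Function.uncurry F)) :
    ∫⁻ x, ∫⁻ y, (F x y + F y x) ∂μ ∂μ = 2 * ∫⁻ x, ∫⁻ y, F x y ∂μ ∂μ := by
  have inner (x : α) :
      ∫⁻ y, (F x y + F y x) ∂μ = ∫⁻ y, F x y ∂μ + ∫⁻ y, F y x ∂μ :=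
    lintegral_add_left (hF.comp measurable_prodMk_left) _
  simp_rw [inner]
  rw [lintegral_add_left (f := fun x => ∫⁻ y, F x y ∂μ) hF.lintegral_prod_right',
    lintegral_lintegral_swap hF.aemeasurable, two_mul]

noncomputable def kernel₀ (s t : ℝ) : ℝ :=
  (s * t) ^ (-(1:ℝ)/2) * exp (-s) * (exp (2 * min s t) - 1) * exp (-t)

noncomputable def kernel₀Diag (u : ℝ) : ℝ := (1 - exp (-(2 * u))) / u

theorem kernel₀_comm (s t : ℝ) : kernel₀ s t = kernel₀ t s := by
  simp only [kernel₀, mul_comm s t, min_comm s t]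
  ring

theorem kernel₀_of_le {s t : ℝ} (hst : s ≤ t) :
    kernel₀ s t = (s * t) ^ (-(1:ℝ)/2) * (1 - exp (-(2 * s))) * exp (-(t - s)) := by
  have hexp : exp (-s) * (exp (2 * s) - 1) * exp (-t)
      = (1 - exp (-(2 * s))) * exp (-(t - s)) := by
    simp only [mul_sub, sub_mul, mul_one, one_mul, ← exp_add]
    ring_nf
  rw [kernel₀, min_eq_left hst]
  linear_combination (s * t) ^ (-(1:ℝ)/2) * hexp

theorem kernel₀_sq_le_of_le {s t : ℝ} (hs : 0 < s) (hst : s ≤ t) :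
    kernel₀ s t ^ 2 ≤ kernel₀Diag s * kernel₀Diag t * exp (-(2 * (t - s))) := by
  have hst₀ : 0 < s * t := mul_pos hs (hs.trans_le hst)
  have hrpow : ((s * t) ^ (-(1:ℝ)/2)) ^ 2 = (s * t)⁻¹ := by
    rw [← rpow_natCast, ← rpow_mul hst₀.le]
    norm_num [rpow_neg_one]
  have hexp : exp (-(t - s)) ^ 2 = exp (-(2 * (t - s))) := by
    rw [← exp_nat_mul]; ring_nf
  have hpos : 0 ≤ 1 - exp (-(2 * s)) := sub_nonneg.2 (exp_le_one_iff.2 (by linarith))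
  have hmono : 1 - exp (-(2 * s)) ≤ 1 - exp (-(2 * t)) := by gcongr
  calc kernel₀ s t ^ 2
      = (1 - exp (-(2 * s))) * (1 - exp (-(2 * s))) * (s * t)⁻¹ * exp (-(2 * (t - s))) := by
        rw [kernel₀_of_le hst, mul_pow, mul_pow, hrpow, hexp]; ring
    _ ≤ (1 - exp (-(2 * s))) * (1 - exp (-(2 * t))) * (s * t)⁻¹ * exp (-(2 * (t - s))) := by
        gcongr
    _ = kernel₀Diag s * kernel₀Diag t * exp (-(2 * (t - s))) := by
        rw [kernel₀Diag, kernel₀Diag, mul_inv]; ring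

theorem kernel₀_sq_le {s t : ℝ} (hs : 0 < s) (ht : 0 < t) :
    kernel₀ s t ^ 2 ≤ kernel₀Diag s * kernel₀Diag t * exp (-(2 * |t - s|)) := by
  rcases le_total s t with hst | hts
  · simpa only [abs_of_nonneg (sub_nonneg.2 hst)] using kernel₀_sq_le_of_le hs hst
  · rw [kernel₀_comm, mul_comm (kernel₀Diag s), abs_sub_comm,
      abs_of_nonneg (sub_nonneg.2 hts)]
    exact kernel₀_sq_le_of_le ht hts

theorem kernel₀Diag_sq_le {u : ℝ} (hu : 0 < u) :
    kernel₀Diag u ^ 2 ≤ 5 * (1 + u ^ 2)⁻¹ := by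
  have hnum_nonneg : 0 ≤ 1 - exp (-(2 * u)) := sub_nonneg.2 (exp_le_one_iff.2 (by linarith))
  have hnum_le_one : 1 - exp (-(2 * u)) ≤ 1 := by linarith [exp_pos (-(2 * u))]
  have hnum_le : 1 - exp (-(2 * u)) ≤ 2 * u := by linarith [one_sub_le_exp_neg (2 * u)]
  have hdiag_le : kernel₀Diag u ≤ 2 := by
    rw [kernel₀Diag, div_le_iff₀ hu]; linarith
  have hmul_diag : u * kernel₀Diag u = 1 - exp (-(2 * u)) := by
    rw [kernel₀Diag]; field_simp
  have hdiag_nonneg : 0 ≤ kernel₀Diag u := div_nonneg hnum_nonneg hu.le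
  rw [le_mul_inv_iff₀ (by positivity)]
  nlinarith

theorem exp_neg_two_mul_abs_le (x : ℝ) : exp (-(2 * |x|)) ≤ (1 + x ^ 2)⁻¹ := by
  rw [exp_neg, show 2 * |x| = |x| + |x| by ring, exp_add]
  gcongr
  nlinarith [add_one_le_exp |x|, abs_nonneg x, sq_abs x]

theorem kernel₀_sq_le_inv_one_add_sq {s t : ℝ} (hs : 0 < s) (ht : 0 < t) :
    kernel₀ s t ^ 2 ≤ 5 * (1 + s ^ 2)⁻¹ * (1 + (t - s) ^ 2)⁻¹
      + 5 * (1 + t ^ 2)⁻¹ * (1 + (s - t) ^ 2)⁻¹ := by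
  have hds := kernel₀Diag_sq_le hs
  have hdt := kernel₀Diag_sq_le ht
  have hprod :
      kernel₀Diag s * kernel₀Diag t ≤ 5 * (1 + s ^ 2)⁻¹ + 5 * (1 + t ^ 2)⁻¹ := by
    nlinarith [two_mul_le_add_sq (kernel₀Diag s) (kernel₀Diag t), sq_nonneg (kernel₀Diag s),
      sq_nonneg (kernel₀Diag t)]
  rw [← neg_sub t s, neg_sq, ← add_mul]
  calc kernel₀ s t ^ 2 ≤ kernel₀Diag s * kernel₀Diag t * exp (-(2 * |t - s|)) :=
        kernel₀_sq_le hs ht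
    _ ≤ _ := mul_le_mul hprod (exp_neg_two_mul_abs_le _) (exp_pos _).le (by positivity)

theorem stmt_13
    (K₀ : ℝ → ℝ → ℝ)
    (hK : K₀ = fun s t => (s * t) ^ (-(1:ℝ)/2) * Real.exp (-s)
        * (Real.exp (2 * min s t) - 1) * Real.exp (-t)) :
    ∫⁻ s in Ioi (0:ℝ), ∫⁻ t in Ioi (0:ℝ), ENNReal.ofReal (K₀ s t ^ 2) < ⊤ := by
  obtain rfl : K₀ = kernel₀ := hK
  set f : ℝ → ℝ≥0∞ := fun x => ENNReal.ofReal (5 * (1 + x ^ 2)⁻¹)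
  set g : ℝ → ℝ≥0∞ := fun x => ENNReal.ofReal (1 + x ^ 2)⁻¹
  have hf : ∫⁻ x, f x < ⊤ := (integrable_inv_one_add_sq.const_mul 5).lintegral_lt_top
  have hg : ∫⁻ x, g x < ⊤ := integrable_inv_one_add_sq.lintegral_lt_top
  have hpointwise : ∀ s ∈ Ioi (0:ℝ), ∀ t ∈ Ioi (0:ℝ),
      ENNReal.ofReal (kernel₀ s t ^ 2) ≤ f s * g (t - s) + f t * g (s - t) := by
    intro s hs t ht
    rw [← ENNReal.ofReal_mul (by positivity), ← ENNReal.ofReal_mul (by positivity),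
      ← ENNReal.ofReal_add (by positivity) (by positivity)]
    exact ENNReal.ofReal_le_ofReal (kernel₀_sq_le_inv_one_add_sq hs ht)
  calc ∫⁻ s in Ioi 0, ∫⁻ t in Ioi 0, ENNReal.ofReal (kernel₀ s t ^ 2)
      ≤ ∫⁻ s in Ioi 0, ∫⁻ t in Ioi 0, (f s * g (t - s) + f t * g (s - t)) :=
        setLIntegral_mono' measurableSet_Ioi fun s hs =>
          setLIntegral_mono' measurableSet_Ioi (hpointwise s hs)
    _ ≤ ∫⁻ s, ∫⁻ t, (f s * g (t - s) + f t * g (s - t)) :=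
        (setLIntegral_le_lintegral _ _).trans
          (lintegral_mono fun s => setLIntegral_le_lintegral _ _)
    _ = 2 * ((∫⁻ x, f x) * ∫⁻ x, g x) := by
        rw [lintegral_lintegral_add_swap (F := fun s t => f s * g (t - s)) volume (by fun_prop),
          lintegral_lintegral_mul_sub_right volume (by fun_prop) (by fun_prop)]
    _ < ⊤ := by finiteness
end

section
/- Let f: (0,∞) → ℂ satisfy |f(s)| ≤ c e^{s} for some constant c > 0, and define (Rf)(s) = ∫₀^s γ₀(t) f(t) w₀(t) dt + γ₀(s) ∫_s^∞ f(t) w₀(t) dt, where γ₀(s) = (1/2)(e^{2s}−1) and w₀(s) = 2s^{-1}e^{-2s}. Then e^{-s}(Rf)(s) → 0 as s → ∞. -/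
open MeasureTheory Real Set Filter

/-!
The kernel of the first integral is `γ₀(t) w₀(t) = t⁻¹ (1 - e^{-2t}) ≤ min 2 t⁻¹`.
Splitting `(0, s]` at `s / 2` and using `|f(t)| ≤ c eᵗ` bounds the first integral by
`2c e^{s/2} + (2c/s) eˢ`, while the tail integral is at most `(2c/s) e^{-s}` and
`γ₀(s) ≤ e^{2s}/2`. Hence `e^{-s} |Rf(s)| ≤ c (2 e^{-s/2} + 3/s) → 0`.
-/

noncomputable section

def gamma0 (s : ℝ) : ℝ := 1 / 2 * (exp (2 * s) - 1)

def w0 (s : ℝ) : ℝ := 2 * s⁻¹ * exp (-2 * s)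

def greenR (f : ℝ → ℂ) (s : ℝ) : ℂ :=
  (∫ t in Ioc (0 : ℝ) s, (gamma0 t * w0 t : ℝ) * f t) +
    (gamma0 s : ℂ) * ∫ t in Ioi s, (w0 t : ℝ) * f t

end

lemma gamma0_mul_w0 (t : ℝ) : gamma0 t * w0 t = t⁻¹ * (1 - exp (-2 * t)) := by
  have h : exp (2 * t) * exp (-2 * t) = 1 := by rw [← exp_add]; simp
  unfold gamma0 w0
  linear_combination t⁻¹ * h

lemma gamma0_mul_w0_nonneg {t : ℝ} (ht : 0 < t) : 0 ≤ gamma0 t * w0 t := by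
  rw [gamma0_mul_w0]
  exact mul_nonneg (inv_nonneg.2 ht.le) (sub_nonneg.2 (exp_le_one_iff.2 (by linarith)))

lemma gamma0_mul_w0_le_two {t : ℝ} (ht : 0 < t) : gamma0 t * w0 t ≤ 2 := by
  rw [gamma0_mul_w0, inv_mul_le_iff₀ ht]
  linarith [add_one_le_exp (-2 * t)]

lemma gamma0_mul_w0_le_inv {t : ℝ} (ht : 0 < t) : gamma0 t * w0 t ≤ t⁻¹ := by
  rw [gamma0_mul_w0]
  exact mul_le_of_le_one_right (inv_nonneg.2 ht.le) (by linarith [exp_pos (-2 * t)])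

lemma measurable_gamma0_mul_w0 : Measurable fun t => gamma0 t * w0 t := by
  unfold gamma0 w0; fun_prop

lemma gamma0_nonneg {s : ℝ} (hs : 0 ≤ s) : 0 ≤ gamma0 s := by
  unfold gamma0
  have : 1 ≤ exp (2 * s) := one_le_exp (by linarith)
  linarith

lemma gamma0_le (s : ℝ) : gamma0 s ≤ exp (2 * s) / 2 := by
  unfold gamma0; linarith

lemma w0_nonneg {t : ℝ} (ht : 0 < t) : 0 ≤ w0 t := by
  unfold w0; positivity

lemma integrableOn_Ioc_mul_exp {k : ℝ → ℝ} {a b M : ℝ} (hkm : Measurable k)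
    (hk : ∀ t ∈ Ioc a b, ‖k t‖ ≤ M) : IntegrableOn (fun t => k t * exp t) (Ioc a b) :=
  continuous_exp.integrableOn_Ioc.bdd_mul hkm.aestronglyMeasurable
    ((ae_restrict_iff' measurableSet_Ioc).2 (ae_of_all _ hk))

lemma setIntegral_Ioc_le_mul_exp {F : ℝ → ℝ} {a b K : ℝ} (hab : a ≤ b)
    (hF : IntegrableOn F (Ioc a b)) (h : ∀ t ∈ Ioc a b, F t ≤ K * exp t) :
    ∫ t in Ioc a b, F t ≤ K * (exp b - exp a) :=
  calc ∫ t in Ioc a b, F t ≤ ∫ t in Ioc a b, K * exp t :=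
        setIntegral_mono_on hF (continuous_const.mul continuous_exp).integrableOn_Ioc
          measurableSet_Ioc h
    _ = K * (exp b - exp a) := by
        rw [← intervalIntegral.integral_of_le hab, intervalIntegral.integral_const_mul,
          integral_exp]

lemma setIntegral_Ioc_mul_exp_le {k : ℝ → ℝ} {s : ℝ} (hs : 0 < s) (hkm : Measurable k)
    (hk0 : ∀ t, 0 < t → 0 ≤ k t) (hk2 : ∀ t, 0 < t → k t ≤ 2)
    (hkinv : ∀ t, 0 < t → k t ≤ t⁻¹) :
    ∫ t in Ioc 0 s, k t * exp t ≤ 2 * exp (s / 2) + 2 / s * exp s := by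
  have hint : IntegrableOn (fun t => k t * exp t) (Ioc 0 s) :=
    integrableOn_Ioc_mul_exp hkm fun t ht => by
      rw [norm_of_nonneg (hk0 t ht.1)]; exact hk2 t ht.1
  have hsplit := Ioc_union_Ioc_eq_Ioc (half_pos hs).le (half_le_self hs.le)
  have hlow : ∫ t in Ioc 0 (s / 2), k t * exp t ≤ 2 * (exp (s / 2) - exp 0) :=
    setIntegral_Ioc_le_mul_exp (half_pos hs).le (hint.mono_set (Ioc_subset_Ioc_right
      (half_le_self hs.le))) fun t ht => mul_le_mul_of_nonneg_right (hk2 t ht.1) (exp_pos t).le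
  have hhigh : ∫ t in Ioc (s / 2) s, k t * exp t ≤ 2 / s * (exp s - exp (s / 2)) := by
    refine setIntegral_Ioc_le_mul_exp (half_le_self hs.le)
      (hint.mono_set (Ioc_subset_Ioc_left (half_pos hs).le)) fun t ht => ?_
    have ht0 : 0 < t := (half_pos hs).trans ht.1
    have : t⁻¹ ≤ 2 / s := by rw [← inv_div]; exact inv_anti₀ (half_pos hs) ht.1.le
    exact mul_le_mul_of_nonneg_right ((hkinv t ht0).trans this) (exp_pos t).le
  rw [← hsplit, setIntegral_union (Ioc_disjoint_Ioc_of_le le_rfl) measurableSet_Ioc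
    (hint.mono_set (hsplit ▸ subset_union_left))
    (hint.mono_set (hsplit ▸ subset_union_right))]
  have : 0 ≤ 2 / s * exp (s / 2) := by positivity
  linarith [exp_pos 0]

lemma norm_setIntegral_Ioc_mul_le {k : ℝ → ℝ} {f : ℝ → ℂ} {c s : ℝ} (hc : 0 ≤ c)
    (hs : 0 < s) (hkm : Measurable k) (hk0 : ∀ t, 0 < t → 0 ≤ k t)
    (hk2 : ∀ t, 0 < t → k t ≤ 2) (hkinv : ∀ t, 0 < t → k t ≤ t⁻¹)
    (hf : ∀ t, 0 < t → ‖f t‖ ≤ c * exp t) :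
    ‖∫ t in Ioc 0 s, (k t : ℂ) * f t‖ ≤ c * (2 * exp (s / 2) + 2 / s * exp s) := by
  have hint : IntegrableOn (fun t => k t * exp t) (Ioc 0 s) :=
    integrableOn_Ioc_mul_exp hkm fun t ht => by
      rw [norm_of_nonneg (hk0 t ht.1)]; exact hk2 t ht.1
  calc ‖∫ t in Ioc 0 s, (k t : ℂ) * f t‖ ≤ ∫ t in Ioc 0 s, c * (k t * exp t) := by
        refine norm_integral_le_of_norm_le (hint.const_mul c)
          ((ae_restrict_iff' measurableSet_Ioc).2 (ae_of_all _ fun t ht => ?_))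
        rw [norm_mul, Complex.norm_real, norm_of_nonneg (hk0 t ht.1)]
        exact (mul_le_mul_of_nonneg_left (hf t ht.1) (hk0 t ht.1)).trans_eq (by ring)
    _ = c * ∫ t in Ioc 0 s, k t * exp t := integral_const_mul c _
    _ ≤ c * (2 * exp (s / 2) + 2 / s * exp s) :=
        mul_le_mul_of_nonneg_left (setIntegral_Ioc_mul_exp_le hs hkm hk0 hk2 hkinv) hc

lemma norm_setIntegral_Ioi_w0_mul_le {f : ℝ → ℂ} {c s : ℝ} (hc : 0 ≤ c) (hs : 0 < s)
    (hf : ∀ t, 0 < t → ‖f t‖ ≤ c * exp t) :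
    ‖∫ t in Ioi s, (w0 t : ℂ) * f t‖ ≤ 2 * c / s * exp (-s) := by
  calc ‖∫ t in Ioi s, (w0 t : ℂ) * f t‖ ≤ ∫ t in Ioi s, 2 * c / s * exp (-t) := by
        refine norm_integral_le_of_norm_le
          (by simpa using (exp_neg_integrableOn_Ioi s one_pos).const_mul (2 * c / s))
          ((ae_restrict_iff' measurableSet_Ioi).2 (ae_of_all _ fun t ht => ?_))
        have ht0 : 0 < t := hs.trans ht
        calc ‖(w0 t : ℂ) * f t‖ = w0 t * ‖f t‖ := by
              rw [norm_mul, Complex.norm_real, norm_of_nonneg (w0_nonneg ht0)]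
          _ ≤ w0 t * (c * exp t) := mul_le_mul_of_nonneg_left (hf t ht0) (w0_nonneg ht0)
          _ = 2 * c * t⁻¹ * exp (-t) := by
              rw [show exp (-t) = exp (-2 * t) * exp t by rw [← exp_add]; ring_nf, w0]; ring
          _ ≤ 2 * c / s * exp (-t) := by
              rw [div_eq_mul_inv]; gcongr; exact ht.le
    _ = 2 * c / s * exp (-s) := by rw [integral_const_mul, integral_exp_neg_Ioi]

lemma exp_neg_mul_norm_greenR_le {f : ℝ → ℂ} {c s : ℝ} (hc : 0 ≤ c) (hs : 0 < s)
    (hf : ∀ t, 0 < t → ‖f t‖ ≤ c * exp t) :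
    exp (-s) * ‖greenR f s‖ ≤ c * (2 * exp (-(s / 2)) + 3 / s) := by
  have hA := norm_setIntegral_Ioc_mul_le (k := fun t => gamma0 t * w0 t) hc hs
    measurable_gamma0_mul_w0 (fun _ => gamma0_mul_w0_nonneg) (fun _ => gamma0_mul_w0_le_two)
    (fun _ => gamma0_mul_w0_le_inv) hf
  have hB := norm_setIntegral_Ioi_w0_mul_le hc hs hf
  have hγ : ‖(gamma0 s : ℂ)‖ ≤ exp (2 * s) / 2 := by
    rw [Complex.norm_real, norm_of_nonneg (gamma0_nonneg hs.le)]; exact gamma0_le s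
  calc exp (-s) * ‖greenR f s‖
      ≤ exp (-s) * (c * (2 * exp (s / 2) + 2 / s * exp s)
          + exp (2 * s) / 2 * (2 * c / s * exp (-s))) := by
        refine mul_le_mul_of_nonneg_left ((norm_add_le _ _).trans (add_le_add hA
          ((norm_mul_le _ _).trans (mul_le_mul hγ hB (norm_nonneg _) (by positivity)))))
          (exp_pos _).le
    _ = c * (2 * exp (-(s / 2)) + 3 / s) := by
        have h1 : exp s = exp (s / 2) ^ 2 := by rw [← exp_nat_mul]; ring_nf
        have h2 : exp (2 * s) = exp (s / 2) ^ 4 := by rw [← exp_nat_mul]; ring_nf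
        rw [exp_neg, exp_neg, h1, h2]
        field_simp
        ring

lemma tendsto_mul_two_mul_exp_neg_half_add_three_div (c : ℝ) :
    Tendsto (fun s : ℝ => c * (2 * exp (-(s / 2)) + 3 / s)) atTop (nhds 0) := by
  have h1 : Tendsto (fun s : ℝ => exp (-(s / 2))) atTop (nhds 0) :=
    tendsto_exp_neg_atTop_nhds_zero.comp (tendsto_id.atTop_div_const two_pos)
  have h2 : Tendsto (fun s : ℝ => 3 / s) atTop (nhds 0) :=
    tendsto_const_nhds.div_atTop tendsto_id
  simpa using ((h1.const_mul 2).add h2).const_mul c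

theorem stmt_18_general
    (f : ℝ → ℂ) (c : ℝ) (hc : 0 < c)
    (hf : ∀ s : ℝ, 0 < s → ‖f s‖ ≤ c * Real.exp s)
    (γ₀ w₀ : ℝ → ℝ)
    (hγ : γ₀ = fun s => (1 / 2) * (Real.exp (2 * s) - 1))
    (hw : w₀ = fun s => 2 * s⁻¹ * Real.exp (-2 * s))
    (Rf : ℝ → ℂ)
    (hR : Rf = fun s => (∫ t in Ioc (0:ℝ) s, (γ₀ t * w₀ t : ℝ) * f t)
        + (γ₀ s : ℂ) * ∫ t in Ioi s, (w₀ t : ℝ) * f t) :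
    Tendsto (fun s : ℝ => (Real.exp (-s) : ℂ) * Rf s) atTop (nhds 0) := by
  subst hγ hw hR
  refine squeeze_zero_norm' ?_ (tendsto_mul_two_mul_exp_neg_half_add_three_div c)
  filter_upwards [eventually_gt_atTop 0] with s hs
  rw [norm_mul, Complex.norm_real, norm_of_nonneg (exp_pos _).le]
  exact exp_neg_mul_norm_greenR_le hc.le hs hf

theorem stmt_18
    (f : ℝ → ℂ) (hfm : Measurable f) (c : ℝ) (hc : 0 < c)
    (hf : ∀ s : ℝ, 0 < s → ‖f s‖ ≤ c * Real.exp s)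
    (γ₀ w₀ : ℝ → ℝ)
    (hγ : γ₀ = fun s => (1 / 2) * (Real.exp (2 * s) - 1))
    (hw : w₀ = fun s => 2 * s⁻¹ * Real.exp (-2 * s))
    (Rf : ℝ → ℂ)
    (hR : Rf = fun s => (∫ t in Ioc (0:ℝ) s, (γ₀ t * w₀ t : ℝ) * f t)
        + (γ₀ s : ℂ) * ∫ t in Ioi s, (w₀ t : ℝ) * f t) :
    Tendsto (fun s : ℝ => (Real.exp (-s) : ℂ) * Rf s) atTop (nhds 0) :=
  stmt_18_general f c hc hf γ₀ w₀ hγ hw Rf hR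
end

section
/- Let f: (0,∞) → ℂ be integrable with respect to w₀(s) ds where w₀(s) = 2s^{-1}e^{-2s}, and define u(s) = ∫₀^s γ₀(t)f(t)w₀(t)dt + γ₀(s)∫_s^∞ f(t)w₀(t)dt with γ₀(s) = (1/2)(e^{2s}−1). Then u(s) → 0 as s → 0⁺ and u'(s) = e^{2s}∫_s^∞ f(t)w₀(t)dt remains bounded as s → 0⁺. -/
open MeasureTheory Real Set Filter Topology

/-! Both limits come from one domination: every tail `∫_{(s,∞)} w₀ f` is bounded by
`M = ∫_{(0,∞)} w₀ |f|`. Hence `u' = e^{2s} ∫_s^∞ w₀ f` stays below `e² M` on `(0,1)`, the second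
term of `u` is at most `γ₀(s) M → 0`, and the first term is the primitive at `s` of the function
`γ₀ w₀ f`, which is integrable near `0` because `γ₀` is continuous up to `0`. -/

section

variable {E : Type*} [NormedAddCommGroup E] [NormedSpace ℝ E]

theorem norm_setIntegral_Ioi_le_of_le {g : ℝ → E} {a s : ℝ} (hg : IntegrableOn g (Ioi a))
    (has : a ≤ s) : ‖∫ t in Ioi s, g t‖ ≤ ∫ t in Ioi a, ‖g t‖ :=
  calc ‖∫ t in Ioi s, g t‖ ≤ ∫ t in Ioi s, ‖g t‖ := norm_integral_le_integral_norm _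
    _ ≤ ∫ t in Ioi a, ‖g t‖ :=
      setIntegral_mono_set hg.norm (Eventually.of_forall fun _ => norm_nonneg _)
        (Ioi_subset_Ioi has).eventuallyLE

theorem tendsto_setIntegral_Ioc_nhdsGT {h : ℝ → E} {a b : ℝ} (hab : a < b)
    (hh : IntegrableOn h (Ioc a b)) :
    Tendsto (fun s => ∫ t in Ioc a s, h t) (𝓝[>] a) (𝓝 0) := by
  have hcont := intervalIntegral.continuousOn_primitive
    ((integrableOn_Icc_iff_integrableOn_Ioc).2 hh) a (left_mem_Icc.mpr hab.le)
  have hle : 𝓝[>] a ≤ 𝓝[Icc a b] a := by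
    rw [← nhdsWithin_Ioc_eq_nhdsGT hab]
    exact nhdsWithin_mono _ Ioc_subset_Icc_self
  simpa using hcont.tendsto.mono_left hle

theorem tendsto_smul_setIntegral_Ioi_nhdsGT {γ : ℝ → ℝ} {g : ℝ → E} {a : ℝ}
    (hγ : Tendsto γ (𝓝[>] a) (𝓝 0)) (hg : IntegrableOn g (Ioi a)) :
    Tendsto (fun s => γ s • ∫ t in Ioi s, g t) (𝓝[>] a) (𝓝 0) := by
  have hbound : ∀ᶠ s in 𝓝[>] a, ‖∫ t in Ioi s, g t‖ ≤ ∫ t in Ioi a, ‖g t‖ := by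
    filter_upwards [self_mem_nhdsWithin] with s hs
    exact norm_setIntegral_Ioi_le_of_le hg (le_of_lt hs)
  exact hγ.zero_smul_isBoundedUnder_le (isBoundedUnder_of_eventually_le hbound)

end

theorem stmt_19_general
    (f : ℝ → ℂ)
    (γ₀ w₀ : ℝ → ℝ)
    (hγ : γ₀ = fun s => (1 / 2) * (Real.exp (2 * s) - 1))
    (hfint : IntegrableOn (fun t => (w₀ t : ℝ) * f t) (Ioi (0:ℝ)))
    (u : ℝ → ℂ)
    (hu : u = fun s => (∫ t in Ioc (0:ℝ) s, (γ₀ t * w₀ t : ℝ) * f t)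
        + (γ₀ s : ℂ) * ∫ t in Ioi s, (w₀ t : ℝ) * f t) :
    Tendsto u (nhdsWithin 0 (Ioi (0:ℝ))) (nhds 0) ∧
    ∃ C : ℝ, ∀ s ∈ Ioo (0:ℝ) 1,
      ‖(Real.exp (2 * s) : ℂ) * ∫ t in Ioi s, (w₀ t : ℝ) * f t‖ ≤ C := by
  have hγ_cont : Continuous γ₀ := hγ ▸ by fun_prop
  have hγ_lim : Tendsto γ₀ (𝓝[>] 0) (𝓝 0) := by
    simpa [hγ] using (hγ_cont.tendsto 0).mono_left nhdsWithin_le_nhds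
  have hγwf_int : IntegrableOn (fun t => ((γ₀ t * w₀ t : ℝ) : ℂ) * f t) (Ioc 0 1) := by
    have hwf : IntegrableOn (fun t => (w₀ t : ℂ) * f t) (Icc 0 1) :=
      (integrableOn_Icc_iff_integrableOn_Ioc).2 (hfint.mono_set Ioc_subset_Ioi_self)
    have := (hwf.continuousOn_mul (Complex.continuous_ofReal.comp hγ_cont).continuousOn
      isCompact_Icc).mono_set Ioc_subset_Icc_self
    simpa only [Complex.ofReal_mul, mul_assoc, Function.comp_apply] using this
  refine ⟨?_, Real.exp 2 * ∫ t in Ioi 0, ‖(w₀ t : ℂ) * f t‖, fun s hs => ?_⟩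
  · simpa [hu, Complex.real_smul] using (tendsto_setIntegral_Ioc_nhdsGT one_pos hγwf_int).add
      (tendsto_smul_setIntegral_Ioi_nhdsGT hγ_lim hfint)
  · rw [norm_mul, Complex.norm_real, Real.norm_of_nonneg (Real.exp_pos _).le]
    exact mul_le_mul (Real.exp_le_exp.mpr (by linarith [hs.2]))
      (norm_setIntegral_Ioi_le_of_le hfint hs.1.le) (norm_nonneg _) (Real.exp_pos _).le

theorem stmt_19
    (f : ℝ → ℂ)
    (γ₀ w₀ : ℝ → ℝ)
    (hγ : γ₀ = fun s => (1 / 2) * (Real.exp (2 * s) - 1))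
    (hw : w₀ = fun s => 2 * s⁻¹ * Real.exp (-2 * s))
    (hfint : IntegrableOn (fun t => (w₀ t : ℝ) * f t) (Ioi (0:ℝ)))
    (u : ℝ → ℂ)
    (hu : u = fun s => (∫ t in Ioc (0:ℝ) s, (γ₀ t * w₀ t : ℝ) * f t)
        + (γ₀ s : ℂ) * ∫ t in Ioi s, (w₀ t : ℝ) * f t) :
    Tendsto u (nhdsWithin 0 (Ioi (0:ℝ))) (nhds 0) ∧
    ∃ C : ℝ, ∀ s ∈ Ioo (0:ℝ) 1,
      ‖(Real.exp (2 * s) : ℂ) * ∫ t in Ioi s, (w₀ t : ℝ) * f t‖ ≤ C :=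
  stmt_19_general f γ₀ w₀ hγ hfint u hu
end
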